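/- arXiv:alg-geom/9710009 — 3 statements merged into one kernel-verified Lean document; each statement's English description precedes it below -/
import Mathlib

section
/- Let E be an elliptic curve and L_1, L_2 degree-3 line bundles on E pulled back to X = E × E via the two projections, with q: X → S the quotient by the swap involution ι and L the line bundle on S with q^*L = L_1 ⊠ L_2 (where L_1 = L_2 = O_E(3P)). Then the multiplication map H^0(q^*L)^ι ⊗ H^0(q^*L)^ι → H^0(q^*(2L))^ι on ι-invariant sections is surjective; consequently H^0(S,L) ⊗ H^0(S,L) → H^0(S,2L) is surjective. -/
open Module

/-- The section `aᵢ ⊗ bⱼ = p₁*αᵢ · p₂*αⱼ` on `E × E`, in a trivialization where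
sections are functions. -/
def tensorSec (E : Type) (α : Fin 3 → E → ℂ) (i j : Fin 3) : E × E → ℂ :=
  fun p => α i p.1 * α j p.2

/-- Invariance under the swap involution `ι(x,y) = (y,x)`. -/
def SwapInvariant (E : Type) (f : E × E → ℂ) : Prop :=
  ∀ x y : E, f (x, y) = f (y, x)

/-- `H⁰(q*L) = H⁰(3P) ⊠ H⁰(3P)`, the span of the `aᵢ ⊗ bⱼ`. -/
noncomputable def H0qL (E : Type) (α : Fin 3 → E → ℂ) : Submodule ℂ (E × E → ℂ) :=
  Submodule.span ℂ (Set.range fun ij : Fin 3 × Fin 3 => tensorSec E α ij.1 ij.2)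

/-- `H⁰(O_E(6P))`, the span of the products `αᵢ·αⱼ` (the multiplication map
`H⁰(3P) ⊗ H⁰(3P) → H⁰(6P)` is surjective since `deg = 3 ≥ 2g(E)+1`). -/
noncomputable def H0sixP (E : Type) (α : Fin 3 → E → ℂ) : Submodule ℂ (E → ℂ) :=
  Submodule.span ℂ (Set.range fun ij : Fin 3 × Fin 3 => α ij.1 * α ij.2)

/-- `H⁰(q*(2L)) = H⁰(6P) ⊠ H⁰(6P)`. -/
noncomputable def H0q2L (E : Type) (α : Fin 3 → E → ℂ) : Submodule ℂ (E × E → ℂ) :=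
  Submodule.span ℂ
    {f | ∃ u ∈ H0sixP E α, ∃ v ∈ H0sixP E α, f = fun p : E × E => u p.1 * v p.2}

/-!
Averaging over `ι`: an invariant `f` equals `½ (f + ι*f)`, and `f ↦ f + ι*f` sends the
generators `u ⊠ v` of `H⁰(q*(2L))` to the symmetric tensors `u ⊠ v + v ⊠ u`, which are
bilinear in `(u, v)`. For `u = αᵢαⱼ`, `v = αₖαₗ` the polarization identity writes
`u ⊠ v + v ⊠ u` through products of the invariant sections `sₘₙ = αₘ ⊠ αₙ + αₙ ⊠ αₘ`
of `H⁰(q*L)`.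
-/

namespace InvariantMultiplication

variable {E : Type}

def symmTensor : (E → ℂ) →ₗ[ℂ] (E → ℂ) →ₗ[ℂ] (E × E → ℂ) :=
  LinearMap.mk₂ ℂ (fun u v p => u p.1 * v p.2 + v p.1 * u p.2)
    (fun _ _ _ => by funext; simp only [Pi.add_apply]; ring)
    (fun _ _ _ => by funext; simp only [Pi.smul_apply, smul_eq_mul]; ring)
    (fun _ _ _ => by funext; simp only [Pi.add_apply]; ring)
    (fun _ _ _ => by funext; simp only [Pi.smul_apply, smul_eq_mul]; ring)

theorem symmTensor_apply (u v : E → ℂ) (p : E × E) :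
    symmTensor u v p = u p.1 * v p.2 + v p.1 * u p.2 :=
  rfl

theorem swapInvariant_symmTensor (u v : E → ℂ) : SwapInvariant E (symmTensor u v) := by
  intro x y
  simp only [symmTensor_apply]
  ring

theorem symmTensor_mul_mul (a b c d : E → ℂ) :
    symmTensor (a * b) (c * d) = (2⁻¹ : ℂ) • (symmTensor a c * symmTensor b d
      + symmTensor a d * symmTensor b c - symmTensor a b * symmTensor c d) := by
  funext p
  simp only [symmTensor_apply, Pi.smul_apply, Pi.add_apply, Pi.sub_apply, Pi.mul_apply,
    smul_eq_mul]
  ring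

theorem symmTensor_mem_H0qL (α : Fin 3 → E → ℂ) (i k : Fin 3) :
    symmTensor (α i) (α k) ∈ H0qL E α :=
  add_mem (Submodule.subset_span ⟨(i, k), rfl⟩) (Submodule.subset_span ⟨(k, i), rfl⟩)

variable (E) in
/-- The image of `H⁰(q*L)^ι ⊗ H⁰(q*L)^ι` under multiplication. -/
noncomputable def invariantProductSpan (α : Fin 3 → E → ℂ) : Submodule ℂ (E × E → ℂ) :=
  Submodule.span ℂ
    {h : E × E → ℂ | ∃ f₁ ∈ H0qL E α, ∃ f₂ ∈ H0qL E α,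
      SwapInvariant E f₁ ∧ SwapInvariant E f₂ ∧ h = f₁ * f₂}

theorem symmTensor_mul_symmTensor_mem (α : Fin 3 → E → ℂ) (i j k l : Fin 3) :
    symmTensor (α i) (α k) * symmTensor (α j) (α l) ∈ invariantProductSpan E α :=
  Submodule.subset_span ⟨_, symmTensor_mem_H0qL α i k, _, symmTensor_mem_H0qL α j l,
    swapInvariant_symmTensor _ _, swapInvariant_symmTensor _ _, rfl⟩

theorem symmTensor_mem_invariantProductSpan (α : Fin 3 → E → ℂ) {u v : E → ℂ}
    (hu : u ∈ H0sixP E α) (hv : v ∈ H0sixP E α) :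
    symmTensor u v ∈ invariantProductSpan E α := by
  suffices Submodule.map₂ symmTensor (H0sixP E α) (H0sixP E α) ≤ invariantProductSpan E α from
    this (Submodule.apply_mem_map₂ _ hu hv)
  rw [H0sixP, Submodule.map₂_span_span, Submodule.span_le]
  rintro _ ⟨_, ⟨⟨i, j⟩, rfl⟩, _, ⟨⟨k, l⟩, rfl⟩, rfl⟩
  dsimp only
  rw [SetLike.mem_coe, symmTensor_mul_mul]
  refine Submodule.smul_mem _ _ (sub_mem (add_mem ?_ ?_) ?_) <;>
    exact symmTensor_mul_symmTensor_mem α _ _ _ _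

def symmetrize : (E × E → ℂ) →ₗ[ℂ] (E × E → ℂ) :=
  LinearMap.id + LinearMap.funLeft ℂ ℂ Prod.swap

theorem symmetrize_mem_invariantProductSpan (α : Fin 3 → E → ℂ) {f : E × E → ℂ}
    (hf : f ∈ H0q2L E α) : symmetrize f ∈ invariantProductSpan E α := by
  suffices (H0q2L E α).map symmetrize ≤ invariantProductSpan E α from
    this (Submodule.mem_map_of_mem hf)
  rw [H0q2L, Submodule.map_span_le]
  rintro _ ⟨u, hu, v, hv, rfl⟩
  convert symmTensor_mem_invariantProductSpan α hu hv using 1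
  funext p
  simp only [symmetrize, LinearMap.add_apply, LinearMap.id_apply, LinearMap.funLeft_apply,
    Pi.add_apply, Prod.fst_swap, Prod.snd_swap, symmTensor_apply]
  ring

theorem symmetrize_of_swapInvariant {f : E × E → ℂ} (hf : SwapInvariant E f) :
    symmetrize f = (2 : ℂ) • f := by
  funext p
  have hswap : f p.swap = f p := (hf p.1 p.2).symm
  simp only [symmetrize, LinearMap.add_apply, LinearMap.id_apply, LinearMap.funLeft_apply,
    Pi.add_apply, Pi.smul_apply, smul_eq_mul, hswap]
  ring

end InvariantMultiplication

open InvariantMultiplication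

theorem invariant_multiplication_surjective_general
    (E : Type) (α : Fin 3 → E → ℂ) :
    ∀ f : E × E → ℂ, f ∈ H0q2L E α → SwapInvariant E f →
      f ∈ Submodule.span ℂ
        {h : E × E → ℂ | ∃ f₁ ∈ H0qL E α, ∃ f₂ ∈ H0qL E α,
          SwapInvariant E f₁ ∧ SwapInvariant E f₂ ∧ h = f₁ * f₂} := by
  intro f hf hsym
  show f ∈ invariantProductSpan E α
  have h2f : (2 : ℂ) • f ∈ invariantProductSpan E α := by
    rw [← symmetrize_of_swapInvariant hsym]
    exact symmetrize_mem_invariantProductSpan α hf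
  simpa using Submodule.smul_mem _ (2⁻¹ : ℂ) h2f

/-- The multiplication map on `ι`-invariant sections
`H⁰(q*L)^ι ⊗ H⁰(q*L)^ι → H⁰(q*(2L))^ι` is surjective: every invariant element
of `H⁰(q*(2L))` lies in the span of products of invariant elements of `H⁰(q*L)`.
Consequently `H⁰(S,L) ⊗ H⁰(S,L) → H⁰(S,2L)` is surjective for the quotient
surface `S = (E×E)/ι`. -/
theorem invariant_multiplication_surjective
    (E : Type) (α : Fin 3 → E → ℂ)
    (hindep : LinearIndependent ℂ α)
    (hmult : finrank ℂ (H0sixP E α) = 6) :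
    ∀ f : E × E → ℂ, f ∈ H0q2L E α → SwapInvariant E f →
      f ∈ Submodule.span ℂ
        {h : E × E → ℂ | ∃ f₁ ∈ H0qL E α, ∃ f₂ ∈ H0qL E α,
          SwapInvariant E f₁ ∧ SwapInvariant E f₂ ∧ h = f₁ * f₂} :=
  invariant_multiplication_surjective_general E α
end

section
/- Let E be a rank-2 vector bundle of degree 9 on a smooth curve C of genus 2 such that the tautological bundle on P(E) is very ample. Then E is stable, μ^-(E) = 9/2 > 4 = 2g, and hence (P(E), O_{P(E)}(1)) is projectively normal. -/
/-! Every line bundle quotient of `E` is very ample, hence of degree `≥ 5 > 9/2 = μ(E)`. So no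
line bundle quotient computes `μ⁻(E)`, which is therefore `μ(E) = 9/2 > 4 = 2g`, and Butler's
criterion applies. -/

section SlopeBounds

variable {Pic : Type*} {degL : Pic → ℤ} {IsLBQuotient : Pic → Prop}

theorem slope_lt_degree_of_quotients_very_ample {VeryAmpleLB : Pic → Prop} {μ : ℚ} {k : ℤ}
    (hμ : μ < k) (hq : ∀ Q, IsLBQuotient Q → VeryAmpleLB Q)
    (hva : ∀ Q, VeryAmpleLB Q → k ≤ degL Q) (Q : Pic) (hQ : IsLBQuotient Q) :
    μ < degL Q :=
  hμ.trans_le (by exact_mod_cast hva Q (hq Q hQ))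

theorem muMinus_eq_slope_of_slope_lt_degree {μ muMinus : ℚ}
    (hdeg : ∀ Q, IsLBQuotient Q → μ < degL Q) (hmuE : muMinus ≤ μ)
    (hmuAtt : muMinus = μ ∨ ∃ Q, IsLBQuotient Q ∧ muMinus = (degL Q : ℚ)) :
    muMinus = μ := by
  rcases hmuAtt with h | ⟨Q, hQ, rfl⟩
  · exact h
  · exact absurd hmuE (hdeg Q hQ).not_ge

end SlopeBounds

theorem genus_two_scroll_projectively_normal_general
    (Pic : Type) (degL : Pic → ℤ)
    (VeryAmpleLB : Pic → Prop)
    -- `IsLBQuotient Q` : `Q` is a line bundle quotient `E → Q → 0`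
    (IsLBQuotient : Pic → Prop)
    -- very ampleness of the tautological bundle makes every line bundle quotient very ample
    (hq : ∀ Q : Pic, IsLBQuotient Q → VeryAmpleLB Q)
    -- a very ample line bundle on a genus-2 curve has degree ≥ 5
    (hva5 : ∀ Q : Pic, VeryAmpleLB Q → 5 ≤ degL Q)
    (muMinus : ℚ)
    (hmuE : muMinus ≤ 9 / 2)  -- `E` is a quotient of itself, `μ(E) = 9/2`
    (hmuAtt : muMinus = 9 / 2 ∨ ∃ Q : Pic, IsLBQuotient Q ∧ muMinus = (degL Q : ℚ))
    (ProjectivelyNormal : Prop)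
    -- Butler's criterion: `μ⁻(E) > 2g = 4` implies projective normality
    (hButler : (4 : ℚ) < muMinus → ProjectivelyNormal) :
    (∀ Q : Pic, IsLBQuotient Q → (9 : ℚ) / 2 < (degL Q : ℚ)) ∧
      muMinus = 9 / 2 ∧ (4 : ℚ) < muMinus ∧ ProjectivelyNormal := by
  have hstable : ∀ Q, IsLBQuotient Q → (9 : ℚ) / 2 < degL Q :=
    slope_lt_degree_of_quotients_very_ample (k := 5) (by norm_num) hq hva5
  have hmu : muMinus = 9 / 2 := muMinus_eq_slope_of_slope_lt_degree hstable hmuE hmuAtt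
  have hbutler : (4 : ℚ) < muMinus := by rw [hmu]; norm_num
  exact ⟨hstable, hmu, hbutler, hButler hbutler⟩

/-- A rank-2 vector bundle `E` of degree `9` on a smooth genus-2 curve whose
tautological bundle on `ℙ(E)` is very ample is stable (every line bundle
quotient has degree `> 9/2`), has `μ⁻(E) = 9/2 > 4 = 2g`, and hence
`(ℙ(E), O_{ℙ(E)}(1))` is projectively normal. -/
theorem genus_two_scroll_projectively_normal
    (Pic : Type) (degL : Pic → ℤ)
    (VeryAmpleLB : Pic → Prop)
    -- `IsLBQuotient Q` : `Q` is a line bundle quotient `E → Q → 0`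
    (IsLBQuotient : Pic → Prop)
    -- very ampleness of the tautological bundle makes every line bundle quotient very ample
    (hq : ∀ Q : Pic, IsLBQuotient Q → VeryAmpleLB Q)
    -- a very ample line bundle on a genus-2 curve has degree ≥ 5
    (hva5 : ∀ Q : Pic, VeryAmpleLB Q → 5 ≤ degL Q)
    (muMinus : ℚ)
    (hmuLB : ∀ Q : Pic, IsLBQuotient Q → muMinus ≤ (degL Q : ℚ))
    (hmuE : muMinus ≤ 9 / 2)  -- `E` is a quotient of itself, `μ(E) = 9/2`
    (hmuAtt : muMinus = 9 / 2 ∨ ∃ Q : Pic, IsLBQuotient Q ∧ muMinus = (degL Q : ℚ))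
    (ProjectivelyNormal : Prop)
    -- Butler's criterion: `μ⁻(E) > 2g = 4` implies projective normality
    (hButler : (4 : ℚ) < muMinus → ProjectivelyNormal) :
    (∀ Q : Pic, IsLBQuotient Q → (9 : ℚ) / 2 < (degL Q : ℚ)) ∧
      muMinus = 9 / 2 ∧ (4 : ℚ) < muMinus ∧ ProjectivelyNormal :=
  genus_two_scroll_projectively_normal_general Pic degL VeryAmpleLB IsLBQuotient hq hva5 muMinus
    hmuE hmuAtt ProjectivelyNormal hButler
end

section
/- There is no integer solution (a, b, a_1, a_2, a_3) with a ≥ 2 and 2b ≥ -a to the system: 4a + 2b - (a_1+a_2+a_3) = 1 and 2 + a(a-1) + 2b(a-1) - Σa_i(a_i - 1) = 0, together with Σa_i^2 ≥ (4a+2b-1)^2/3. Equivalently, the inequality 4b(b-1) + 13a(a-1) + 10ab - 4a - 2 ≤ 0 has no integer solutions with a ≥ 2 and 2b ≥ -a. -/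
/-!
The degree and genus equations are linear in `∑ aᵢ` and `∑ aᵢ²`, so they determine both in
terms of `a` and `b`; the Cauchy–Schwarz bound `(∑ aᵢ)² ≤ 3 ∑ aᵢ²` then says exactly that
`lineDefect a b ≤ 0`. On the other hand, with `c = 2b + a ≥ 0`,
`lineDefect a b = c (c + 3a - 2) + (a - 2)(9a + 3) + 4 > 0` once `a ≥ 2`.
-/

section LinearOrderedCommRing

variable {R : Type*} [CommRing R] [LinearOrder R] [IsStrictOrderedRing R]

def lineDefect (a b : R) : R :=
  4 * b * (b - 1) + 13 * a * (a - 1) + 10 * a * b - 4 * a - 2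

theorem lineDefect_pos {a b : R} (ha : 2 ≤ a) (hb : -a ≤ 2 * b) : 0 < lineDefect a b := by
  have hc : 0 ≤ (2 * b + a) * (2 * b + 4 * a - 2) := mul_nonneg (by linarith) (by linarith)
  have ha' : 0 ≤ (a - 2) * (9 * a + 3) := mul_nonneg (by linarith) (by linarith)
  have hdecomp : lineDefect a b = (2 * b + a) * (2 * b + 4 * a - 2) + (a - 2) * (9 * a + 3) + 4 := by
    unfold lineDefect; ring
  linarith

theorem lineDefect_nonpos {a b a₁ a₂ a₃ : R}
    (hdeg : 4 * a + 2 * b - (a₁ + a₂ + a₃) = 1)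
    (hgenus : 2 + a * (a - 1) + 2 * b * (a - 1) -
      (a₁ * (a₁ - 1) + a₂ * (a₂ - 1) + a₃ * (a₃ - 1)) = 0)
    (hCS : (4 * a + 2 * b - 1) ^ 2 ≤ 3 * (a₁ ^ 2 + a₂ ^ 2 + a₃ ^ 2)) :
    lineDefect a b ≤ 0 := by
  have hsq : a₁ ^ 2 + a₂ ^ 2 + a₃ ^ 2 =
      2 + a * (a - 1) + 2 * b * (a - 1) + (4 * a + 2 * b - 1) := by
    linear_combination -hgenus - hdeg
  unfold lineDefect
  linear_combination hCS + 3 * hsq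

end LinearOrderedCommRing

/-- The arithmetic core of the classification of lines on the blown-up elliptic
`ℙ¹`-bundle: there is no integer solution `(a, b, a₁, a₂, a₃)` with `a ≥ 2` and
`2b ≥ -a` of the system `4a + 2b - (a₁+a₂+a₃) = 1`,
`2 + a(a-1) + 2b(a-1) - ∑ aᵢ(aᵢ-1) = 0` and `∑ aᵢ² ≥ (4a+2b-1)²/3`;
equivalently, `4b(b-1) + 13a(a-1) + 10ab - 4a - 2 ≤ 0` has no integer solution
with `a ≥ 2` and `2b ≥ -a`. -/
theorem no_lines_arithmetic :
    (¬ ∃ a b a₁ a₂ a₃ : ℤ, 2 ≤ a ∧ -a ≤ 2 * b ∧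
        4 * a + 2 * b - (a₁ + a₂ + a₃) = 1 ∧
        2 + a * (a - 1) + 2 * b * (a - 1) -
          (a₁ * (a₁ - 1) + a₂ * (a₂ - 1) + a₃ * (a₃ - 1)) = 0 ∧
        (4 * a + 2 * b - 1) ^ 2 ≤ 3 * (a₁ ^ 2 + a₂ ^ 2 + a₃ ^ 2)) ∧
    (¬ ∃ a b : ℤ, 2 ≤ a ∧ -a ≤ 2 * b ∧
        4 * b * (b - 1) + 13 * a * (a - 1) + 10 * a * b - 4 * a - 2 ≤ 0) := by
  constructor
  · rintro ⟨a, b, a₁, a₂, a₃, ha, hb, hdeg, hgenus, hCS⟩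
    exact (lineDefect_pos ha hb).not_ge (lineDefect_nonpos hdeg hgenus hCS)
  · rintro ⟨a, b, ha, hb, h⟩
    exact (lineDefect_pos ha hb).not_ge h
end
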